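/- Let k ≥ 2 and t ≥ 2 be integers and P > 0. Let X ⊆ ℝ^d be a finite set with |X| = t, partitioned into nonempty sets G_1, …, G_k, and suppose there are points z_i ∈ G_i such that ‖x − z_i‖ ≤ 4P for all x ∈ G_i and ‖z_i − z_j‖ > 4(t+2)·P for all i ≠ j. Then for every finite set S ⊆ ℝ^d with |S| = k and L(X, S) = L_k(X) (i.e., S is an optimal set of k means for X), and for all x ∈ G_i and x' ∈ G_j with i ≠ j, there is no c ∈ S with ‖x − c‖ = min_{s∈S} ‖x − s‖ and ‖x' − c‖ = min_{s∈S} ‖x' − s‖; that is, points from distinct groups are never assigned to the same optimal center. -/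

import Mathlib

/-! Placing one center at every `z_m` costs at most `16 (t - 2) P²`: the `z_m` themselves cost
nothing and every other point lies within `4P` of the `z_m` of its group. Hence in an optimal
solution every `z_m` has a center `c_m` within `2tP`, as `16 (t - 2) < 4 t²`. If a point of `G_a`
is assigned to `c_b`, the triangle inequality puts `z_a` and `z_b` within `8P + 4tP = 4(t+2)P`,
so `a = b`. In particular the `c_m` are distinct, hence they are all of `S`, and each center of
`S` serves a single group. -/

/-- The k-means cost `L(X, S) = ∑_{x∈X} min_{c∈S} ‖x − c‖²`. -/
noncomputable def kmeansCost {d : ℕ} (X S : Finset (EuclideanSpace ℝ (Fin d))) : ℝ :=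
  ∑ x ∈ X, sInf ((fun c => ‖x - c‖ ^ 2) '' (S : Set (EuclideanSpace ℝ (Fin d))))

/-- `L_k(X)`: the infimum of `L(X, S)` over all sets `S` with `|S| = k`. -/
noncomputable def kmeansOpt {d : ℕ} (k : ℕ) (X : Finset (EuclideanSpace ℝ (Fin d))) : ℝ :=
  sInf {r : ℝ | ∃ S : Finset (EuclideanSpace ℝ (Fin d)), S.card = k ∧ kmeansCost X S = r}

/-- `min_{s∈S} ‖x − s‖`, the distance from `x` to its nearest center in `S`. -/
noncomputable def nearestDist {d : ℕ} (S : Finset (EuclideanSpace ℝ (Fin d)))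
    (x : EuclideanSpace ℝ (Fin d)) : ℝ :=
  sInf ((fun s => ‖x - s‖) '' (S : Set (EuclideanSpace ℝ (Fin d))))

open Finset

theorem dist_le_of_dist_le_dist {α : Type*} [PseudoMetricSpace α] {y a b ca cb : α}
    (h : dist y cb ≤ dist y ca) : dist a b ≤ 2 * dist y a + dist a ca + dist b cb := by
  have hab := dist_triangle4 a y cb b
  have hyca := dist_triangle y a ca
  linarith [dist_comm a y, dist_comm cb b]

section KMeans

variable {d : ℕ}

local notation "ℝᵈ" => EuclideanSpace ℝ (Fin d)

theorem nearestDist_le {S : Finset ℝᵈ} {s : ℝᵈ} (x : ℝᵈ) (hs : s ∈ S) :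
    nearestDist S x ≤ ‖x - s‖ :=
  csInf_le (S.finite_toSet.image _).bddBelow ⟨s, hs, rfl⟩

theorem nearestDist_nonneg (S : Finset ℝᵈ) (x : ℝᵈ) : 0 ≤ nearestDist S x :=
  Real.sInf_nonneg (by rintro _ ⟨s, -, rfl⟩; exact norm_nonneg _)

theorem nearestDist_eq_zero_of_mem {S : Finset ℝᵈ} {x : ℝᵈ} (hx : x ∈ S) :
    nearestDist S x = 0 :=
  le_antisymm (by simpa using nearestDist_le x hx) (nearestDist_nonneg S x)

theorem exists_mem_norm_sub_eq_nearestDist {S : Finset ℝᵈ} (hS : S.Nonempty) (x : ℝᵈ) :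
    ∃ c ∈ S, ‖x - c‖ = nearestDist S x := by
  obtain ⟨c, hc, hmin⟩ := S.exists_min_image (fun s => ‖x - s‖) hS
  refine ⟨c, hc, le_antisymm ?_ (nearestDist_le x hc)⟩
  exact le_csInf (hS.to_set.image _) (by rintro _ ⟨s, hs, rfl⟩; exact hmin s hs)

theorem kmeansCost_eq_sum_nearestDist_sq (X S : Finset ℝᵈ) :
    kmeansCost X S = ∑ x ∈ X, nearestDist S x ^ 2 := by
  refine sum_congr rfl fun x _ => ?_
  rcases S.eq_empty_or_nonempty with rfl | hS
  · simp [nearestDist]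
  obtain ⟨c, hc, hcx⟩ := exists_mem_norm_sub_eq_nearestDist hS x
  rw [← hcx]
  refine IsLeast.csInf_eq ⟨⟨c, hc, rfl⟩, ?_⟩
  rintro _ ⟨s, hs, rfl⟩
  exact pow_le_pow_left₀ (norm_nonneg _) (hcx ▸ nearestDist_le x hs) 2

theorem kmeansCost_nonneg (X S : Finset ℝᵈ) : 0 ≤ kmeansCost X S := by
  rw [kmeansCost_eq_sum_nearestDist_sq]
  positivity

theorem sq_nearestDist_le_kmeansCost {X : Finset ℝᵈ} (S : Finset ℝᵈ) {x : ℝᵈ} (hx : x ∈ X) :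
    nearestDist S x ^ 2 ≤ kmeansCost X S := by
  rw [kmeansCost_eq_sum_nearestDist_sq]
  exact single_le_sum (fun y _ => sq_nonneg (nearestDist S y)) hx

theorem kmeansOpt_le_kmeansCost {k : ℕ} (X : Finset ℝᵈ) {S : Finset ℝᵈ} (hS : #S = k) :
    kmeansOpt k X ≤ kmeansCost X S :=
  csInf_le ⟨0, by rintro _ ⟨S', -, rfl⟩; exact kmeansCost_nonneg X S'⟩ ⟨S, hS, rfl⟩

theorem kmeansCost_le_card_sdiff_mul {X S T : Finset ℝᵈ} {R : ℝ} (hTX : T ⊆ X) (hTS : T ⊆ S)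
    (hR : ∀ x ∈ X, ∃ s ∈ S, ‖x - s‖ ≤ R) : kmeansCost X S ≤ #(X \ T) * R ^ 2 := by
  have hT : ∑ x ∈ T, nearestDist S x ^ 2 = 0 :=
    sum_eq_zero fun x hx => by rw [nearestDist_eq_zero_of_mem (hTS hx), zero_pow two_ne_zero]
  rw [kmeansCost_eq_sum_nearestDist_sq, ← sum_sdiff hTX, hT, add_zero, ← nsmul_eq_mul]
  refine sum_le_card_nsmul _ _ _ fun x hx => ?_
  obtain ⟨s, hs, hxs⟩ := hR x (mem_sdiff.1 hx).1
  exact pow_le_pow_left₀ (nearestDist_nonneg S x) ((nearestDist_le x hs).trans hxs) 2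

theorem eq_of_norm_sub_eq_nearestDist {ι : Type*} {S : Finset ℝᵈ} {z c : ι → ℝᵈ} {r ρ : ℝ}
    (hcS : ∀ m, c m ∈ S) (hc : ∀ m, ‖z m - c m‖ ≤ ρ)
    (hzfar : ∀ i j, i ≠ j → 2 * r + 2 * ρ < ‖z i - z j‖) {a b : ι} {y : ℝᵈ}
    (hya : ‖y - z a‖ ≤ r) (hyb : ‖y - c b‖ = nearestDist S y) : a = b := by
  by_contra hab
  have hnearer : dist y (c b) ≤ dist y (c a) := by
    simpa only [dist_eq_norm, hyb] using nearestDist_le y (hcS a)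
  have htriangle := dist_le_of_dist_le_dist (a := z a) (b := z b) hnearer
  simp only [dist_eq_norm] at htriangle
  linarith [hzfar a b hab, hc a, hc b]

theorem kmeansCost_image_le {ι : Type*} [Fintype ι] {X : Finset ℝᵈ} {z : ι → ℝᵈ} {R : ℝ}
    (hX : ∀ x ∈ X, ∃ m, ‖x - z m‖ ≤ R) {i j : ι} (hzi : z i ∈ X) (hzj : z j ∈ X)
    (hzij : z i ≠ z j) : kmeansCost X (univ.image z) ≤ (#X - 2 : ℝ) * R ^ 2 := by
  have hTX : {z i, z j} ⊆ X := insert_subset_iff.2 ⟨hzi, singleton_subset_iff.2 hzj⟩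
  have hTS : {z i, z j} ⊆ univ.image z := insert_subset_iff.2
    ⟨mem_image_of_mem z (mem_univ i), singleton_subset_iff.2 (mem_image_of_mem z (mem_univ j))⟩
  have hR : ∀ x ∈ X, ∃ s ∈ univ.image z, ‖x - s‖ ≤ R := fun x hx =>
    let ⟨m, hm⟩ := hX x hx
    ⟨z m, mem_image_of_mem z (mem_univ m), hm⟩
  have hcost := kmeansCost_le_card_sdiff_mul hTX hTS hR
  rwa [cast_card_sdiff hTX, card_pair hzij, Nat.cast_two] at hcost

theorem nearestDist_le_of_kmeansCost_eq_kmeansOpt {k : ℕ} {X : Finset ℝᵈ} {z : Fin k → ℝᵈ}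
    {R : ℝ} (hR : 0 ≤ R) (hzX : ∀ m, z m ∈ X) (hX : ∀ x ∈ X, ∃ m, ‖x - z m‖ ≤ R)
    (hzinj : Function.Injective z) {i j : Fin k} (hij : i ≠ j) {S : Finset ℝᵈ}
    (hopt : kmeansCost X S = kmeansOpt k X) (m : Fin k) :
    nearestDist S (z m) ≤ #X * R / 2 := by
  have himage : #(univ.image z) = k := by rw [card_image_of_injective _ hzinj, card_fin]
  have hsq : nearestDist S (z m) ^ 2 ≤ (#X - 2 : ℝ) * R ^ 2 :=
    calc nearestDist S (z m) ^ 2 ≤ kmeansCost X S := sq_nearestDist_le_kmeansCost S (hzX m)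
      _ ≤ kmeansCost X (univ.image z) := hopt ▸ kmeansOpt_le_kmeansCost X himage
      _ ≤ (#X - 2 : ℝ) * R ^ 2 := kmeansCost_image_le hX (hzX i) (hzX j) (hzinj.ne hij)
  -- `(t R / 2)² - (t - 2) R² = ((t - 2)² / 4 + 1) R²`
  have hsq' : nearestDist S (z m) ^ 2 ≤ (#X * R / 2) ^ 2 :=
    hsq.trans (by nlinarith [mul_nonneg (sq_nonneg ((#X : ℝ) - 2)) (sq_nonneg R)])
  exact (pow_le_pow_iff_left₀ (nearestDist_nonneg S (z m)) (by positivity) two_ne_zero).1 hsq'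

end KMeans

theorem optimal_centers_separate_groups_general {d : ℕ} (k t : ℕ)
    (P : ℝ) (X : Finset (EuclideanSpace ℝ (Fin d))) (hXcard : X.card = t)
    (G : Fin k → Finset (EuclideanSpace ℝ (Fin d)))
    (hGunion : (⋃ i, ((G i : Set (EuclideanSpace ℝ (Fin d))))) =
      (X : Set (EuclideanSpace ℝ (Fin d))))
    (z : Fin k → EuclideanSpace ℝ (Fin d)) (hz : ∀ i, z i ∈ G i)
    (hznear : ∀ i, ∀ x ∈ G i, ‖x - z i‖ ≤ 4 * P)
    (hzfar : ∀ i j, i ≠ j → 4 * ((t : ℝ) + 2) * P < ‖z i - z j‖)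
    (S : Finset (EuclideanSpace ℝ (Fin d))) (hScard : S.card = k)
    (hopt : kmeansCost X S = kmeansOpt k X)
    (i j : Fin k) (hij : i ≠ j) (x x' : EuclideanSpace ℝ (Fin d))
    (hx : x ∈ G i) (hx' : x' ∈ G j) :
    ¬ ∃ c ∈ S, ‖x - c‖ = nearestDist S x ∧ ‖x' - c‖ = nearestDist S x' := by
  subst hXcard
  rintro ⟨c₀, hc₀, hxc₀, hx'c₀⟩
  have hP : 0 ≤ P := by simpa using hznear i (z i) (hz i)
  have hzinj : Function.Injective z := fun a b hab => by
    by_contra hne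
    have hfar := hzfar a b hne
    rw [hab, sub_self, norm_zero] at hfar
    exact hfar.not_ge (by positivity)
  have hzX (m : Fin k) : z m ∈ X := by
    rw [← mem_coe, ← hGunion]
    exact Set.mem_iUnion_of_mem m (hz m)
  have hXG (y) (hy : y ∈ X) : ∃ m, ‖y - z m‖ ≤ 4 * P := by
    obtain ⟨m, hm⟩ := Set.mem_iUnion.1 (hGunion ▸ mem_coe.2 hy : y ∈ ⋃ i, (G i : Set _))
    exact ⟨m, hznear m y hm⟩
  choose c hcS hc using
    fun m => exists_mem_norm_sub_eq_nearestDist (card_pos.1 (hScard ▸ i.pos)) (z m)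
  have hcnear (m : Fin k) : ‖z m - c m‖ ≤ #X * (4 * P) / 2 :=
    (hc m).trans_le (nearestDist_le_of_kmeansCost_eq_kmeansOpt (by positivity)
      hzX hXG hzinj hij hopt m)
  have hassign {a b : Fin k} {y} (hya : ‖y - z a‖ ≤ 4 * P) (hyb : ‖y - c b‖ = nearestDist S y) :
      a = b :=
    eq_of_norm_sub_eq_nearestDist hcS hcnear (fun a b hab => by linarith [hzfar a b hab]) hya hyb
  have hcinj : Function.Injective c := fun a b hab =>
    hassign (y := z a) (by simpa using hP) (hab ▸ hc a)
  obtain ⟨m, -, rfl⟩ := surjOn_of_injOn_of_card_le c (s := univ) (fun m _ => hcS m) hcinj.injOn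
    (by simp [hScard]) hc₀
  exact hij ((hassign (hznear i x hx) hxc₀).trans (hassign (hznear j x' hx') hx'c₀).symm)

/-- Suppose `X` (with `|X| = t`) is partitioned into nonempty groups `G_1, …, G_k` with
points `z_i ∈ G_i` such that each group lies within `4P` of its `z_i` and
`‖z_i − z_j‖ > 4(t+2)P` for `i ≠ j`. Then in any optimal `k`-means solution `S` for `X`,
points from distinct groups are never assigned to the same optimal center. -/
theorem optimal_centers_separate_groups {d : ℕ} (k t : ℕ) (hk : 2 ≤ k) (ht : 2 ≤ t)
    (P : ℝ) (hP : 0 < P) (X : Finset (EuclideanSpace ℝ (Fin d))) (hXcard : X.card = t)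
    (G : Fin k → Finset (EuclideanSpace ℝ (Fin d))) (hGne : ∀ i, (G i).Nonempty)
    (hGdisj : Pairwise fun i j => Disjoint (G i) (G j))
    (hGunion : (⋃ i, ((G i : Set (EuclideanSpace ℝ (Fin d))))) =
      (X : Set (EuclideanSpace ℝ (Fin d))))
    (z : Fin k → EuclideanSpace ℝ (Fin d)) (hz : ∀ i, z i ∈ G i)
    (hznear : ∀ i, ∀ x ∈ G i, ‖x - z i‖ ≤ 4 * P)
    (hzfar : ∀ i j, i ≠ j → 4 * ((t : ℝ) + 2) * P < ‖z i - z j‖)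
    (S : Finset (EuclideanSpace ℝ (Fin d))) (hScard : S.card = k)
    (hopt : kmeansCost X S = kmeansOpt k X)
    (i j : Fin k) (hij : i ≠ j) (x x' : EuclideanSpace ℝ (Fin d))
    (hx : x ∈ G i) (hx' : x' ∈ G j) :
    ¬ ∃ c ∈ S, ‖x - c‖ = nearestDist S x ∧ ‖x' - c‖ = nearestDist S x' :=
  optimal_centers_separate_groups_general k t P X hXcard G hGunion z hz hznear hzfar S hScard hopt i
    j hij x x' hx hx'
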